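/- Let m ≥ 1 and let a₁,…,a_m be distinct complex numbers in the open upper half-plane. Then there exists a unique vector (α₁,…,α_m) ∈ ℂ^m satisfying the Vandermonde system Σ_{j=1}^m α_j a_j^k = δ_{k,0} for k = 0, 1, …, m−1 (i.e. Σ α_j = 1 and Σ α_j a_j^k = 0 for 1 ≤ k ≤ m−1). Moreover, setting b_j = conj(a_j) and β_j = conj(α_j), the function K(x) = (1/(2πi))[ Σ_{j=1}^m α_j/(x−a_j) − Σ_{j=1}^m β_j/(x−b_j) ] is real-valued on ℝ and is an mth order kernel. -/

import Mathlib

open MeasureTheory Real Set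

/-- The rational kernel with poles `a j` in the upper half-plane and `b j` in the
lower half-plane, and residues `α j`, `β j`. -/
noncomputable def ratKernel {n₁ n₂ : ℕ} (a : Fin n₁ → ℂ) (b : Fin n₂ → ℂ)
    (α : Fin n₁ → ℂ) (β : Fin n₂ → ℂ) (x : ℝ) : ℂ :=
  (1 / (2 * Real.pi * Complex.I)) *
    (∑ j, α j / ((x : ℂ) - a j) - ∑ j, β j / ((x : ℂ) - b j))

/-!
The Vandermonde matrix of distinct nodes is invertible, which gives the unique `α`. Write
`S_γ(x) = ∑ γ_j / (x - a_j)`; on `ℝ` the kernel is `Im S_α(x) / π`. Expanding `x^k / (x - a)`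
geometrically, `x^k S_α(x)` is `S_{α a^k}(x)` plus a polynomial in `x` whose coefficients are the
moments of `α` of order `< k`; these are real, so `K(x) x^k = Im S_{α a^k}(x) / π` for `k ≤ m`.
Every `S_γ` is `O(1 / (1 + |x|))`, so the case `k = m` gives decay of order `m + 1`, and
`∫ Im S_γ = π Re ∑ γ_j`, because over `[-T, T]` the integral of `Im (γ / (x - a))` is a log
difference tending to `0` plus an arctan difference tending to `π Re γ`.
-/

open Finset Filter Topology

theorem existsUnique_sum_mul_pow_eq {K : Type*} [Field K] {m : ℕ} {a : Fin m → K}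
    (ha : Function.Injective a) (c : ℕ → K) :
    ∃! α : Fin m → K, ∀ k < m, ∑ j, α j * a j ^ k = c k := by
  have hV : IsUnit (Matrix.vandermonde a) := by
    rw [Matrix.isUnit_iff_isUnit_det, isUnit_iff_ne_zero]
    exact Matrix.det_vandermonde_ne_zero_iff.mpr ha
  have hbij : Function.Bijective (Matrix.vandermonde a).vecMul :=
    ⟨Matrix.vecMul_injective_iff_isUnit.mpr hV, Matrix.vecMul_surjective_iff_isUnit.mpr hV⟩
  convert hbij.existsUnique (fun k => c k) using 2 with α
  simp only [funext_iff, Fin.forall_iff, Matrix.vecMul, dotProduct, Matrix.vandermonde_apply]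

theorem delta_moments_iff {R : Type*} [Semiring R] {m : ℕ} (hm : 1 ≤ m) (a α : Fin m → R) :
    ((∑ j, α j) = 1 ∧ ∀ k : ℕ, 1 ≤ k → k < m → ∑ j, α j * a j ^ k = 0) ↔
      ∀ k < m, ∑ j, α j * a j ^ k = if k = 0 then 1 else 0 := by
  refine ⟨fun ⟨h₀, h⟩ k hk => ?_, fun h => ⟨by simpa using h 0 hm, fun k hk₁ hk => ?_⟩⟩
  · rcases Nat.eq_zero_or_pos k with rfl | hk₀
    · simpa using h₀
    · simpa [hk₀.ne'] using h k hk₀ hk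
  · simpa [Nat.one_le_iff_ne_zero.mp hk₁] using h k hk

theorem pow_mul_div_sub {K : Type*} [Field K] {x a : K} (hx : x ≠ a) (γ : K) (k : ℕ) :
    x ^ k * (γ / (x - a)) = γ * ∑ i ∈ range k, x ^ i * a ^ (k - 1 - i) + γ * a ^ k / (x - a) := by
  have hxa : x - a ≠ 0 := sub_ne_zero.mpr hx
  field_simp
  linear_combination (-γ) * geom_sum₂_mul x a k

theorem pow_mul_sum_div_sub {K ι : Type*} [Field K] [Fintype ι] {x : K} {a : ι → K}
    (hx : ∀ j, x ≠ a j) (γ : ι → K) (k : ℕ) :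
    x ^ k * ∑ j, γ j / (x - a j) =
      ∑ i ∈ range k, (∑ j, γ j * a j ^ (k - 1 - i)) * x ^ i + ∑ j, γ j * a j ^ k / (x - a j) := by
  simp_rw [Finset.mul_sum, pow_mul_div_sub (hx _), Finset.sum_add_distrib, Finset.mul_sum]
  rw [Finset.sum_comm]
  congr 1
  refine Finset.sum_congr rfl fun i _ => ?_
  rw [Finset.sum_mul]
  exact Finset.sum_congr rfl fun j _ => by ring

theorem im_pow_mul_sum_div_sub {ι : Type*} [Fintype ι] {a : ι → ℂ} (ha : ∀ j, (a j).im ≠ 0)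
    (γ : ι → ℂ) {k : ℕ} (hreal : ∀ l < k, (∑ j, γ j * a j ^ l).im = 0) (x : ℝ) :
    x ^ k * (∑ j, γ j / (x - a j)).im = (∑ j, γ j * a j ^ k / (x - a j)).im := by
  have hx : ∀ j, (x : ℂ) ≠ a j := fun j h => ha j (by simp [← h])
  have hshift := congrArg Complex.im (pow_mul_sum_div_sub hx γ k)
  have hpoly : (∑ i ∈ range k, (∑ j, γ j * a j ^ (k - 1 - i)) * (x : ℂ) ^ i).im = 0 := by
    rw [Complex.im_sum]
    refine Finset.sum_eq_zero fun i hi => ?_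
    rw [Finset.mem_range] at hi
    rw [← Complex.ofReal_pow, Complex.im_mul_ofReal, hreal _ (by omega), zero_mul]
  rwa [← Complex.ofReal_pow, Complex.im_ofReal_mul, Complex.add_im, hpoly, zero_add] at hshift

theorem one_add_abs_le_mul_norm_sub {a : ℂ} (ha : a.im ≠ 0) (x : ℝ) :
    1 + |x| ≤ (1 + (1 + ‖a‖) / |a.im|) * ‖(x : ℂ) - a‖ := by
  have him : |a.im| ≤ ‖(x : ℂ) - a‖ := by
    simpa using Complex.abs_im_le_norm ((x : ℂ) - a)
  have hre : |x| ≤ ‖(x : ℂ) - a‖ + ‖a‖ := by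
    simpa using norm_le_norm_sub_add (x : ℂ) a
  have hcoef : 1 + ‖a‖ ≤ (1 + ‖a‖) / |a.im| * ‖(x : ℂ) - a‖ := by
    rw [div_mul_eq_mul_div, le_div_iff₀ (abs_pos.mpr ha)]
    exact mul_le_mul_of_nonneg_left him (by positivity)
  linarith

theorem exists_norm_sum_div_sub_le {ι : Type*} [Fintype ι] {a : ι → ℂ} (ha : ∀ j, (a j).im ≠ 0)
    (γ : ι → ℂ) : ∃ C, ∀ x : ℝ, ‖∑ j, γ j / ((x : ℂ) - a j)‖ ≤ C / (1 + |x|) := by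
  refine ⟨∑ j, ‖γ j‖ * (1 + (1 + ‖a j‖) / |(a j).im|), fun x => ?_⟩
  rw [Finset.sum_div]
  refine (norm_sum_le _ _).trans (Finset.sum_le_sum fun j _ => ?_)
  have hxa : 0 < ‖(x : ℂ) - a j‖ :=
    norm_pos_iff.mpr fun h => ha j (by simp [← sub_eq_zero.mp h])
  rw [norm_div, div_le_div_iff₀ hxa (by positivity), mul_assoc]
  gcongr
  exact one_add_abs_le_mul_norm_sub (ha j) x

theorem abs_le_div_one_add_abs_pow {y x C₁ C₂ : ℝ} (m : ℕ) (h₁ : |y| ≤ C₁ / (1 + |x|))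
    (h₂ : |y * x ^ m| ≤ C₂ / (1 + |x|)) : |y| ≤ 2 ^ m * (C₁ + C₂) / (1 + |x|) ^ (m + 1) := by
  have hx : 0 < 1 + |x| := by positivity
  rw [abs_mul, abs_pow] at h₂
  rw [le_div_iff₀ hx] at h₁ h₂
  have hpow : (1 + |x|) ^ m ≤ 2 ^ m * (1 + |x| ^ m) := by
    calc (1 + |x|) ^ m ≤ 2 ^ (m - 1) * (1 ^ m + |x| ^ m) := add_pow_le zero_le_one (abs_nonneg x) m
      _ ≤ 2 ^ m * (1 + |x| ^ m) := by
        rw [one_pow]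
        gcongr
        · norm_num
        · omega
  rw [le_div_iff₀ (by positivity), pow_succ]
  calc |y| * ((1 + |x|) ^ m * (1 + |x|)) ≤ |y| * (2 ^ m * (1 + |x| ^ m) * (1 + |x|)) := by
        gcongr
    _ = 2 ^ m * (|y| * (1 + |x|) + |y| * |x| ^ m * (1 + |x|)) := by ring
    _ ≤ 2 ^ m * (C₁ + C₂) := by gcongr

theorem im_div_ofReal_sub (γ a : ℂ) (y : ℝ) :
    (γ / ((y : ℂ) - a)).im = (γ.im * (y - a.re) + γ.re * a.im) / ((y - a.re) ^ 2 + a.im ^ 2) := by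
  rw [Complex.div_im, Complex.normSq_apply]
  simp only [Complex.sub_re, Complex.sub_im, Complex.ofReal_re, Complex.ofReal_im]
  ring

theorem hasDerivAt_log_add_arctan (γ : ℂ) {a : ℂ} (ha : a.im ≠ 0) (y : ℝ) :
    HasDerivAt (fun t : ℝ => γ.im / 2 * log ((t - a.re) ^ 2 + a.im ^ 2) +
      γ.re * arctan ((t - a.re) / a.im)) (γ / ((y : ℂ) - a)).im y := by
  have hpos : 0 < (y - a.re) ^ 2 + a.im ^ 2 := by positivity
  have hlog : HasDerivAt (fun t : ℝ => log ((t - a.re) ^ 2 + a.im ^ 2))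
      (2 * (y - a.re) / ((y - a.re) ^ 2 + a.im ^ 2)) y := by
    simpa using ((((hasDerivAt_id y).sub_const a.re).pow 2).add_const (a.im ^ 2)).log hpos.ne'
  have harctan : HasDerivAt (fun t : ℝ => arctan ((t - a.re) / a.im))
      (1 / (1 + ((y - a.re) / a.im) ^ 2) * (1 / a.im)) y := by
    simpa using (((hasDerivAt_id y).sub_const a.re).div_const a.im).arctan
  refine ((hlog.const_mul (γ.im / 2)).add (harctan.const_mul γ.re)).congr_deriv ?_
  rw [im_div_ofReal_sub]
  field_simp
  ring

theorem tendsto_log_sub_log_neg (p q : ℝ) (hq : q ≠ 0) :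
    Tendsto (fun T : ℝ => log ((T - p) ^ 2 + q ^ 2) - log ((-T - p) ^ 2 + q ^ 2)) atTop (𝓝 0) := by
  set r : ℝ → ℝ := fun u => ((1 - p * u) ^ 2 + (q * u) ^ 2) / ((1 + p * u) ^ 2 + (q * u) ^ 2)
  have hr : ContinuousAt (fun u => log (r u)) 0 := by
    refine ContinuousAt.log ?_ (by simp [r])
    exact ContinuousAt.div (by fun_prop) (by fun_prop) (by simp)
  have := hr.tendsto.comp tendsto_inv_atTop_zero
  norm_num [r, Function.comp_def] at this
  refine this.congr' ?_
  filter_upwards [eventually_gt_atTop 0] with T hT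
  rw [← log_div (by positivity) (by positivity)]
  congr 1
  field_simp
  ring

theorem tendsto_arctan_sub_div_atTop (p : ℝ) {q : ℝ} (hq : 0 < q) :
    Tendsto (fun T : ℝ => arctan ((T - p) / q)) atTop (𝓝 (π / 2)) :=
  (tendsto_arctan_atTop.mono_right nhdsWithin_le_nhds).comp
    ((tendsto_atTop_add_const_right _ _ tendsto_id).atTop_div_const hq)

theorem continuous_im_div_ofReal_sub (γ : ℂ) {a : ℂ} (ha : a.im ≠ 0) :
    Continuous fun x : ℝ => (γ / ((x : ℂ) - a)).im :=
  Complex.continuous_im.comp <| continuous_const.div (by fun_prop)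
    fun x h => ha (by simp [← sub_eq_zero.mp h])

theorem tendsto_intervalIntegral_im_div_sub (γ : ℂ) {a : ℂ} (ha : 0 < a.im) :
    Tendsto (fun T : ℝ => ∫ x in -T..T, (γ / ((x : ℂ) - a)).im) atTop (𝓝 (π * γ.re)) := by
  have hint : ∀ T : ℝ, ∫ x in -T..T, (γ / ((x : ℂ) - a)).im =
      γ.im / 2 * (log ((T - a.re) ^ 2 + a.im ^ 2) - log ((-T - a.re) ^ 2 + a.im ^ 2)) +
        γ.re * (arctan ((T - a.re) / a.im) + arctan ((T - -a.re) / a.im)) := by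
    intro T
    rw [intervalIntegral.integral_eq_sub_of_hasDerivAt
      (fun y _ => hasDerivAt_log_add_arctan γ ha.ne' y)
      ((continuous_im_div_ofReal_sub γ ha.ne').intervalIntegrable _ _)]
    rw [show (-T - a.re) / a.im = -((T - -a.re) / a.im) by ring, arctan_neg]
    ring
  have hlim := ((tendsto_log_sub_log_neg a.re a.im ha.ne').const_mul (γ.im / 2)).add
    (((tendsto_arctan_sub_div_atTop a.re ha).add
      (tendsto_arctan_sub_div_atTop (-a.re) ha)).const_mul γ.re)
  rw [funext hint]
  convert hlim using 2
  ring

theorem integral_im_sum_div_sub {ι : Type*} [Fintype ι] {a : ι → ℂ} (ha : ∀ j, 0 < (a j).im)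
    (γ : ι → ℂ) (hint : Integrable fun x : ℝ => (∑ j, γ j / ((x : ℂ) - a j)).im) :
    ∫ x : ℝ, (∑ j, γ j / ((x : ℂ) - a j)).im = π * (∑ j, γ j).re := by
  have hsum : ∀ T : ℝ, ∫ x in -T..T, (∑ j, γ j / ((x : ℂ) - a j)).im =
      ∑ j, ∫ x in -T..T, (γ j / ((x : ℂ) - a j)).im := fun T => by
    simp_rw [Complex.im_sum]
    exact intervalIntegral.integral_finsetSum fun j _ =>
      (continuous_im_div_ofReal_sub (γ j) (ha j).ne').intervalIntegrable _ _
  have hlim : Tendsto (fun T : ℝ => ∫ x in -T..T, (∑ j, γ j / ((x : ℂ) - a j)).im) atTop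
      (𝓝 (π * (∑ j, γ j).re)) := by
    rw [funext hsum, Complex.re_sum, Finset.mul_sum]
    exact tendsto_finsetSum _ fun j _ => tendsto_intervalIntegral_im_div_sub (γ j) (ha j)
  exact tendsto_nhds_unique (intervalIntegral_tendsto_integral hint tendsto_neg_atTop_atBot
    tendsto_id) hlim

theorem integrable_mul_pow_of_abs_le_div {f : ℝ → ℝ} (hf : AEStronglyMeasurable f) {C : ℝ}
    {n k : ℕ} (hkn : k + 2 ≤ n) (hbound : ∀ x, |f x| ≤ C / (1 + |x|) ^ n) :
    Integrable fun x => f x * x ^ k := by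
  have hC : 0 ≤ C := by simpa using (abs_nonneg _).trans (hbound 0)
  refine (integrable_inv_one_add_sq.const_mul C).mono' (hf.mul (by fun_prop)) ?_
  refine Eventually.of_forall fun x => ?_
  rw [Real.norm_eq_abs, abs_mul, abs_pow, ← div_eq_mul_inv]
  calc |f x| * |x| ^ k ≤ C / (1 + |x|) ^ n * (1 + |x|) ^ k := by
        gcongr
        · exact hbound x
        · simp
    _ = C / (1 + |x|) ^ (n - k) := by
        rw [div_mul_eq_mul_div, div_eq_div_iff (by positivity) (by positivity), mul_assoc,
          ← pow_add, Nat.add_sub_cancel' (by omega)]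
    _ ≤ C / (1 + |x|) ^ 2 :=
        div_le_div_of_nonneg_left hC (by positivity) (pow_le_pow_right₀ (by simp) (by omega))
    _ ≤ C / (1 + x ^ 2) := by
        gcongr
        nlinarith [abs_nonneg x, sq_abs x]

section ConjugateKernel

variable {n : ℕ} {a : Fin n → ℂ} (γ : Fin n → ℂ)

theorem ratKernel_conj (x : ℝ) :
    ratKernel a (fun j => starRingEnd ℂ (a j)) γ (fun j => starRingEnd ℂ (γ j)) x =
      (((∑ j, γ j / ((x : ℂ) - a j)).im / π : ℝ) : ℂ) := by
  have hconj : ∑ j, starRingEnd ℂ (γ j) / ((x : ℂ) - starRingEnd ℂ (a j)) =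
      starRingEnd ℂ (∑ j, γ j / ((x : ℂ) - a j)) := by
    simp [map_sum, map_div₀]
  rw [ratKernel, hconj, Complex.sub_conj]
  have hπ : (π : ℂ) ≠ 0 := Complex.ofReal_ne_zero.mpr pi_ne_zero
  push_cast
  field_simp

theorem ratKernel_conj_im (x : ℝ) :
    (ratKernel a (fun j => starRingEnd ℂ (a j)) γ (fun j => starRingEnd ℂ (γ j)) x).im = 0 := by
  rw [ratKernel_conj, Complex.ofReal_im]

theorem ratKernel_conj_re (x : ℝ) :
    (ratKernel a (fun j => starRingEnd ℂ (a j)) γ (fun j => starRingEnd ℂ (γ j)) x).re =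
      (∑ j, γ j / ((x : ℂ) - a j)).im / π := by
  rw [ratKernel_conj, Complex.ofReal_re]

theorem ratKernel_conj_re_mul_pow (ha : ∀ j, (a j).im ≠ 0) {k : ℕ}
    (hreal : ∀ l < k, (∑ j, γ j * a j ^ l).im = 0) (x : ℝ) :
    (ratKernel a (fun j => starRingEnd ℂ (a j)) γ (fun j => starRingEnd ℂ (γ j)) x).re * x ^ k =
      (∑ j, γ j * a j ^ k / ((x : ℂ) - a j)).im / π := by
  rw [ratKernel_conj_re, div_mul_eq_mul_div, mul_comm, im_pow_mul_sum_div_sub ha γ hreal]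

theorem exists_abs_ratKernel_conj_re_le (ha : ∀ j, (a j).im ≠ 0) {m : ℕ}
    (hreal : ∀ l < m, (∑ j, γ j * a j ^ l).im = 0) :
    ∃ C > 0, ∀ x : ℝ,
      |(ratKernel a (fun j => starRingEnd ℂ (a j)) γ (fun j => starRingEnd ℂ (γ j)) x).re| ≤
        C / (1 + |x|) ^ (m + 1) := by
  obtain ⟨C₁, hC₁⟩ := exists_norm_sum_div_sub_le ha γ
  obtain ⟨C₂, hC₂⟩ := exists_norm_sum_div_sub_le ha fun j => γ j * a j ^ m
  have hbound : ∀ (z : ℂ) (C : ℝ) (x : ℝ), ‖z‖ ≤ C / (1 + |x|) → |z.im / π| ≤ C / π / (1 + |x|) :=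
    fun z C x hz => by
      rw [abs_div, abs_of_pos pi_pos, div_right_comm]
      gcongr
      exact (Complex.abs_im_le_norm z).trans hz
  refine ⟨max (2 ^ m * (C₁ / π + C₂ / π)) 1, lt_max_of_lt_right one_pos, fun x => ?_⟩
  have h₁ := hbound _ _ x (hC₁ x)
  have h₂ := hbound _ _ x (hC₂ x)
  rw [← ratKernel_conj_re] at h₁
  rw [← ratKernel_conj_re_mul_pow γ ha hreal] at h₂
  exact (abs_le_div_one_add_abs_pow m h₁ h₂).trans
    (div_le_div_of_nonneg_right (le_max_left _ _) (by positivity))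

theorem integral_ratKernel_conj_re_mul_pow (ha : ∀ j, 0 < (a j).im) {k : ℕ}
    (hreal : ∀ l < k, (∑ j, γ j * a j ^ l).im = 0)
    (hint : Integrable fun x : ℝ =>
      (ratKernel a (fun j => starRingEnd ℂ (a j)) γ (fun j => starRingEnd ℂ (γ j)) x).re * x ^ k) :
    ∫ x : ℝ,
      (ratKernel a (fun j => starRingEnd ℂ (a j)) γ (fun j => starRingEnd ℂ (γ j)) x).re * x ^ k =
        (∑ j, γ j * a j ^ k).re := by
  have hK := ratKernel_conj_re_mul_pow γ (fun j => (ha j).ne') hreal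
  simp_rw [hK] at hint ⊢
  rw [integral_div, integral_im_sum_div_sub ha _ (by simpa using hint.mul_const π)]
  field_simp

end ConjugateKernel

theorem measurable_ratKernel_re {n₁ n₂ : ℕ} (a : Fin n₁ → ℂ) (b : Fin n₂ → ℂ) (α : Fin n₁ → ℂ)
    (β : Fin n₂ → ℂ) : Measurable fun x => (ratKernel a b α β x).re := by
  unfold ratKernel
  fun_prop

/-- Given `m ≥ 1` and distinct poles `a₁,…,a_m` in the open upper half-plane,
the Vandermonde system `Σ_j α_j a_j^k = δ_{k,0}` (`k = 0,…,m−1`) has a unique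
solution `α`, and with `b_j = conj a_j`, `β_j = conj α_j` the resulting rational
kernel is real-valued on `ℝ` and is an `m`th order kernel. -/
theorem stmt_10 (m : ℕ) (hm : 1 ≤ m) (a : Fin m → ℂ)
    (ha : Function.Injective a) (haU : ∀ j, 0 < (a j).im) :
    ∃ α : Fin m → ℂ,
      ((∑ j, α j) = 1 ∧ ∀ k : ℕ, 1 ≤ k → k < m → (∑ j, α j * a j ^ k) = 0) ∧
      (∀ α' : Fin m → ℂ,
        ((∑ j, α' j) = 1 ∧ ∀ k : ℕ, 1 ≤ k → k < m → (∑ j, α' j * a j ^ k) = 0) →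
        α' = α) ∧
      (∀ x : ℝ,
        (ratKernel a (fun j => starRingEnd ℂ (a j)) α (fun j => starRingEnd ℂ (α j)) x).im
          = 0) ∧
      Integrable (fun x : ℝ =>
        (ratKernel a (fun j => starRingEnd ℂ (a j)) α (fun j => starRingEnd ℂ (α j)) x).re) ∧
      (∫ x : ℝ,
        (ratKernel a (fun j => starRingEnd ℂ (a j)) α (fun j => starRingEnd ℂ (α j)) x).re)
        = 1 ∧
      (∀ j : ℕ, 0 < j → j < m →
        Integrable (fun x : ℝ =>
          (ratKernel a (fun i => starRingEnd ℂ (a i)) α (fun i => starRingEnd ℂ (α i)) x).re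
            * x ^ j) ∧
        (∫ x : ℝ,
          (ratKernel a (fun i => starRingEnd ℂ (a i)) α (fun i => starRingEnd ℂ (α i)) x).re
            * x ^ j) = 0) ∧
      ∃ CK > (0 : ℝ), ∀ x : ℝ,
        |(ratKernel a (fun j => starRingEnd ℂ (a j)) α (fun j => starRingEnd ℂ (α j)) x).re|
          ≤ CK / (1 + |x|) ^ (m + 1) := by
  obtain ⟨α, hα, huniq⟩ := existsUnique_sum_mul_pow_eq ha fun k => if k = 0 then (1 : ℂ) else 0
  have hreal : ∀ l < m, (∑ j, α j * a j ^ l).im = 0 := fun l hl => by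
    rw [hα l hl]; split_ifs <;> simp
  obtain ⟨C, hC, hdecay⟩ := exists_abs_ratKernel_conj_re_le α (fun j => (haU j).ne') hreal
  have hint : ∀ k < m, Integrable fun x : ℝ =>
      (ratKernel a (fun j => starRingEnd ℂ (a j)) α (fun j => starRingEnd ℂ (α j)) x).re * x ^ k :=
    fun k hk => integrable_mul_pow_of_abs_le_div
      (measurable_ratKernel_re _ _ _ _).aestronglyMeasurable (by omega) hdecay
  have hmoment : ∀ k < m, ∫ x : ℝ,
      (ratKernel a (fun j => starRingEnd ℂ (a j)) α (fun j => starRingEnd ℂ (α j)) x).re * x ^ k =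
        if k = 0 then 1 else 0 := fun k hk => by
    rw [integral_ratKernel_conj_re_mul_pow α haU (fun l hl => hreal l (hl.trans hk)) (hint k hk),
      hα k hk]
    split_ifs <;> simp
  refine ⟨α, (delta_moments_iff hm a α).2 hα,
    fun α' h => huniq α' ((delta_moments_iff hm a α').1 h), ratKernel_conj_im α,
    by simpa using hint 0 hm, by simpa using hmoment 0 hm,
    fun k hk hkm => ⟨hint k hkm, by simpa [hk.ne'] using hmoment k hkm⟩, C, hC, hdecay⟩
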